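/- arXiv:1812.05090 — 4 statements merged into one kernel-verified Lean document; each statement's English description precedes it below -/
import Mathlib

section
/- For all integers n, t ≥ 1 and all θ, φ, h ∈ ℝ, every eigenvalue λ of the transfer matrix T_{θ,φ}[h] satisfies |λ| ≤ (1 + |cos θ|)^n. -/
noncomputable section
open Complex Matrix Finset
open scoped Kronecker

abbrev QOp (ι : Type) := Matrix (ι → Fin 2) (ι → Fin 2) ℂ

def pauliX : Matrix (Fin 2) (Fin 2) ℂ := !![0, 1; 1, 0]
def pauliY : Matrix (Fin 2) (Fin 2) ℂ := !![0, -Complex.I; Complex.I, 0]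
def pauliZ : Matrix (Fin 2) (Fin 2) ℂ := !![1, 0; 0, -1]

def site {ι : Type} [DecidableEq ι] [Fintype ι] (M : Matrix (Fin 2) (Fin 2) ℂ) (j : ι) :
    QOp ι :=
  Matrix.of fun x y => ∏ k, if k = j then M (x k) (y k) else if x k = y k then (1 : ℂ) else 0

abbrev mexp {ι : Type} [DecidableEq ι] [Fintype ι] (A : QOp ι) : QOp ι :=
  NormedSpace.exp A

/-- Spin configurations of the chain with sites `(ν,τ)`, `ν ∈ {1,…,n}`, `τ ∈ {1,…,t}`. -/
abbrev HIdx (n t : ℕ) := (Fin n × Fin t) → Fin 2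

/-- Operators on the doubled space `H ⊗ H`. -/
abbrev DOp (n t : ℕ) := Matrix (HIdx n t × HIdx n t) (HIdx n t × HIdx n t) ℂ

/-- `M^a_ν = Σ_τ σ^a_{ν,τ}`. -/
def Msum (n t : ℕ) (M : Matrix (Fin 2) (Fin 2) ℂ) (ν : Fin n) : QOp (Fin n × Fin t) :=
  ∑ τ : Fin t, site M (ν, τ)

/-- `U_{ν,φ} = exp(−i(π/4)Σ_{τ=1}^{t−1} σ^z_{ν,τ}σ^z_{ν,τ+1} − i(φ/2)σ^z_{ν,1})`. -/
def Uop (n t : ℕ) (ht : 0 < t) (ν : Fin n) (φ : ℝ) : QOp (Fin n × Fin t) :=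
  mexp ((-Complex.I) • (((Real.pi / 4 : ℝ) : ℂ) •
      ∑ τ : Fin t, (if h2 : (τ : ℕ) + 1 < t then
        site pauliZ (ν, τ) * site pauliZ (ν, ⟨(τ : ℕ) + 1, h2⟩) else 0)
    + ((φ / 2 : ℝ) : ℂ) • site pauliZ (ν, ⟨0, ht⟩)))

/-- `V_ν(φ,h) = U_{ν,φ}·exp(−ih M^z_ν)·exp(i(π/4)M^x_ν)`. -/
def Vop (n t : ℕ) (ht : 0 < t) (ν : Fin n) (φ h : ℝ) : QOp (Fin n × Fin t) :=
  Uop n t ht ν φ * mexp ((-Complex.I) • (((h : ℝ) : ℂ) • Msum n t pauliZ ν)) *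
    mexp (Complex.I • (((Real.pi / 4 : ℝ) : ℂ) • Msum n t pauliX ν))

/-- `G^a_{ν,τ} = ½(1⊗1 + σ^a_{ν,τ} ⊗ σ^a_{ν,τ})` on the doubled space. -/
def Gop (n t : ℕ) (M : Matrix (Fin 2) (Fin 2) ℂ) (p : Fin n × Fin t) : DOp n t :=
  (1 / 2 : ℂ) • (1 + site M p ⊗ₖ site M p)

/-- `B^z_{ν,1}[θ]`. -/
def Bop (n t : ℕ) (ht : 0 < t) (ν : Fin n) (θ : ℝ) : DOp n t :=
  let K : QOp (Fin n × Fin t) :=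
    ((Real.cos (θ / 2) : ℝ) : ℂ) • ((1 / 2 : ℂ) • (1 + site pauliZ (ν, ⟨0, ht⟩))) +
      ((Real.sin (θ / 2) : ℝ) : ℂ) • ((1 / 2 : ℂ) • (1 - site pauliZ (ν, ⟨0, ht⟩)))
  (2 : ℂ) • (K ⊗ₖ K)

/-- `𝕌^{(ν)}_φ[h] = V_ν(φ,h) ⊗ V_ν(φ,h)^*`. -/
def UUop (n t : ℕ) (ht : 0 < t) (ν : Fin n) (φ h : ℝ) : DOp n t :=
  Vop n t ht ν φ h ⊗ₖ (Vop n t ht ν φ h).map (starRingEnd ℂ)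

/-- The transfer matrix `T_{θ,φ}[h] = ∏_ν B^z_{ν,1}[θ]·G^z_{ν,t}·𝕌^{(ν)}_φ[h]`. -/
def Tmat (n t : ℕ) (ht : 0 < t) (θ φ h : ℝ) : DOp n t :=
  (List.ofFn (fun ν : Fin n =>
    Bop n t ht ν θ * Gop n t pauliZ (ν, ⟨t - 1, by omega⟩) * UUop n t ht ν φ h)).prod

/-- The transfer matrix at `θ = π/2`: `T_{π/2,φ}[h] = ∏_ν G^z_{ν,t}·𝕌^{(ν)}_φ[h]`. -/
def TmatHalf (n t : ℕ) (ht : 0 < t) (φ h : ℝ) : DOp n t :=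
  (List.ofFn (fun ν : Fin n =>
    Gop n t pauliZ (ν, ⟨t - 1, by omega⟩) * UUop n t ht ν φ h)).prod

/-- The maximally entangled vector `|𝟙⟩ = 2^{−nt/2} Σ_s |s⟩⊗|s⟩`. -/
def oneVec (n t : ℕ) : HIdx n t × HIdx n t → ℂ :=
  fun p => if p.1 = p.2 then (((Real.sqrt 2 ^ (n * t) : ℝ) : ℂ))⁻¹ else 0

/-- Matrix of the permutation of tensor factors sending `(ν,τ)` to `(ν−1 mod n, τ)`. -/
def permMat (n t : ℕ) : Matrix (HIdx n t) (HIdx n t) ℂ :=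
  Matrix.of fun r s => if (∀ p : Fin n × Fin t, r p = s (finRotate n p.1, p.2)) then 1 else 0

/-- `P` : identity on the first factor, cyclic shift of the `n` copies on the second. -/
def Pop (n t : ℕ) : DOp n t :=
  (1 : Matrix (HIdx n t) (HIdx n t) ℂ) ⊗ₖ permMat n t

/-- `|Ψ⟩ = P†|𝟙⟩`. -/
def PsiVec (n t : ℕ) : HIdx n t × HIdx n t → ℂ :=
  (Pop n t)ᴴ.mulVec (oneVec n t)

/-!
Each factor `B·G·𝕌` of the transfer matrix has operator norm at most `1 + |cos θ|`: `𝕌 = V ⊗ V^*`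
is unitary because `V` is a product of exponentials of anti-Hermitian operators; `G` is an
orthogonal projection because `σ^z ⊗ σ^z` is a Hermitian involution; and `B` is diagonal with
entries `2 w_i w_j`, `w = (cos (θ/2), sin (θ/2))`, bounded by `2 max w_i² = 1 + |cos θ|`.
The operator norm is submultiplicative and dominates every eigenvalue.
-/

open scoped Matrix.Norms.L2Operator

namespace Matrix

variable {m : Type*} [Fintype m] [DecidableEq m]

theorem exp_mem_unitary_of_mem_skewAdjoint {A : Matrix m m ℂ}
    (hA : A ∈ skewAdjoint (Matrix m m ℂ)) : NormedSpace.exp A ∈ unitary (Matrix m m ℂ) := by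
  rw [Unitary.mem_iff, star_eq_conjTranspose, ← exp_conjTranspose, ← star_eq_conjTranspose,
    skewAdjoint.mem_iff.mp hA, ← exp_add_of_commute _ _ (Commute.refl A).neg_left,
    ← exp_add_of_commute _ _ (Commute.refl A).neg_right, neg_add_cancel, add_neg_cancel,
    NormedSpace.exp_zero, and_self]

theorem map_conj_mem_unitary {R : Type*} [CommRing R] [StarRing R] {U : Matrix m m R}
    (hU : U ∈ unitary (Matrix m m R)) : U.map (starRingEnd R) ∈ unitary (Matrix m m R) := by
  have h : ∀ V : Matrix m m R, star (V.map (starRingEnd R)) = (star V).map (starRingEnd R) :=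
    fun V => by ext; rfl
  rw [Unitary.mem_iff] at hU ⊢
  simp only [h, ← Matrix.map_mul, hU.1, hU.2, Matrix.map_one _ (map_zero _) (map_one _), and_self]

theorem norm_le_l2_opNorm_of_mulVec_eq_smul {𝕜 : Type*} [RCLike 𝕜] {A : Matrix m m 𝕜}
    {v : m → 𝕜} {μ : 𝕜} (hv : v ≠ 0) (hAv : A *ᵥ v = μ • v) : ‖μ‖ ≤ ‖A‖ := by
  have hx : 0 < ‖WithLp.toLp 2 v‖ := norm_pos_iff.2 (by simpa using hv)
  have := l2_opNorm_mulVec A (WithLp.toLp 2 v)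
  rw [WithLp.ofLp_toLp, hAv] at this
  change ‖μ • WithLp.toLp 2 v‖ ≤ _ at this
  rw [norm_smul] at this
  exact le_of_mul_le_mul_right this hx

end Matrix

theorem isStarProjection_half_smul_one_add {𝕜 A : Type*} [RCLike 𝕜] [Ring A] [StarRing A]
    [Algebra 𝕜 A] [StarModule 𝕜 A] {s : A} (hs : IsSelfAdjoint s) (hss : s * s = 1) :
    IsStarProjection ((1 / 2 : 𝕜) • (1 + s)) := by
  refine ⟨?_, IsSelfAdjoint.smul ?_ ((IsSelfAdjoint.one A).add hs)⟩
  · have : (1 + s) * (1 + s) = (2 : 𝕜) • (1 + s) := by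
      rw [mul_add, add_mul, add_mul, hss, two_smul]
      noncomm_ring
    rw [IsIdempotentElem, smul_mul_smul_comm, this, smul_smul]
    norm_num
  · simp [IsSelfAdjoint]

theorem List.norm_prod_ofFn_le {A : Type*} [NormedRing A] [NormOneClass A] {n : ℕ}
    (f : Fin n → A) {c : ℝ} (hf : ∀ i, ‖f i‖ ≤ c) : ‖(List.ofFn f).prod‖ ≤ c ^ n := by
  refine (List.norm_prod_le _).trans ?_
  rw [List.map_ofFn, List.prod_ofFn]
  exact (Finset.prod_le_prod (fun i _ => norm_nonneg (f i)) (fun i _ => hf i)).trans_eq (by simp)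

section Site

variable {ι : Type} [Fintype ι] [DecidableEq ι]

def piKron (f : ι → Matrix (Fin 2) (Fin 2) ℂ) : QOp ι :=
  Matrix.of fun x y => ∏ k, f k (x k) (y k)

theorem piKron_mul (f g : ι → Matrix (Fin 2) (Fin 2) ℂ) :
    piKron f * piKron g = piKron fun k => f k * g k := by
  ext x y
  simp only [piKron, Matrix.mul_apply, Matrix.of_apply, Finset.prod_univ_sum,
    Fintype.piFinset_univ, Finset.prod_mul_distrib]

omit [DecidableEq ι] in
theorem piKron_one : piKron (fun _ : ι => (1 : Matrix (Fin 2) (Fin 2) ℂ)) = 1 := by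
  ext x y
  simp [piKron, Matrix.one_apply, funext_iff, Finset.prod_boole]

omit [DecidableEq ι] in
theorem conjTranspose_piKron (f : ι → Matrix (Fin 2) (Fin 2) ℂ) :
    (piKron f)ᴴ = piKron fun k => (f k)ᴴ := by
  ext x y
  simp [piKron, Matrix.conjTranspose_apply]

omit [DecidableEq ι] in
theorem piKron_diagonal (d : ι → Fin 2 → ℂ) :
    piKron (fun k => Matrix.diagonal (d k)) = Matrix.diagonal fun x => ∏ k, d k (x k) := by
  ext x y
  by_cases hxy : x = y
  · simp [piKron, hxy]
  · obtain ⟨k, hk⟩ := Function.ne_iff.mp hxy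
    rw [Matrix.diagonal_apply_ne _ hxy]
    exact Finset.prod_eq_zero (Finset.mem_univ k) (Matrix.diagonal_apply_ne _ hk)

theorem site_eq_piKron (M : Matrix (Fin 2) (Fin 2) ℂ) (j : ι) :
    site M j = piKron fun k => if k = j then M else 1 := by
  ext x y
  refine Finset.prod_congr rfl fun k _ => ?_
  by_cases k = j <;> simp [*, Matrix.one_apply]

theorem site_mul_site (M N : Matrix (Fin 2) (Fin 2) ℂ) (j : ι) :
    site M j * site N j = site (M * N) j := by
  simp only [site_eq_piKron, piKron_mul]
  congr 1
  funext k
  split_ifs <;> simp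

theorem site_one (j : ι) : site (1 : Matrix (Fin 2) (Fin 2) ℂ) j = 1 := by
  simp [site_eq_piKron, piKron_one]

theorem conjTranspose_site (M : Matrix (Fin 2) (Fin 2) ℂ) (j : ι) :
    (site M j)ᴴ = site Mᴴ j := by
  simp only [site_eq_piKron, conjTranspose_piKron]
  congr 1
  funext k
  split_ifs <;> simp

theorem isSelfAdjoint_site {M : Matrix (Fin 2) (Fin 2) ℂ} (hM : IsSelfAdjoint M) (j : ι) :
    IsSelfAdjoint (site M j) :=
  (conjTranspose_site M j).trans (congrArg (site · j) hM)

theorem commute_site_site (M N : Matrix (Fin 2) (Fin 2) ℂ) {a b : ι} (hab : a ≠ b) :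
    Commute (site M a) (site N b) := by
  rw [Commute, SemiconjBy, site_eq_piKron, site_eq_piKron, piKron_mul, piKron_mul]
  congr 1
  funext k
  by_cases ha : k = a <;> by_cases hb : k = b <;> simp_all

theorem isSelfAdjoint_site_mul_site {M N : Matrix (Fin 2) (Fin 2) ℂ} (hM : IsSelfAdjoint M)
    (hN : IsSelfAdjoint N) {a b : ι} (hab : a ≠ b) : IsSelfAdjoint (site M a * site N b) :=
  ((isSelfAdjoint_site hM a).commute_iff (isSelfAdjoint_site hN b)).mp (commute_site_site M N hab)

theorem site_diagonal (d : Fin 2 → ℂ) (j : ι) :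
    site (Matrix.diagonal d) j = Matrix.diagonal fun x => d (x j) := by
  have : (fun k => if k = j then Matrix.diagonal d else 1) =
      fun k => Matrix.diagonal (if k = j then d else 1) := by
    ext1 k
    split_ifs <;> simp
  rw [site_eq_piKron, this, piKron_diagonal]
  congr 1
  ext1 x
  rw [Finset.prod_eq_single j (fun k _ hk => by simp [hk]) (by simp)]
  simp

end Site

theorem isSelfAdjoint_pauliX : IsSelfAdjoint pauliX := by
  ext i j
  fin_cases i <;> fin_cases j <;> simp [pauliX]

theorem isSelfAdjoint_pauliZ : IsSelfAdjoint pauliZ := by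
  ext i j
  fin_cases i <;> fin_cases j <;> simp [pauliZ]

theorem pauliZ_mul_self : pauliZ * pauliZ = 1 := by
  ext i j
  fin_cases i <;> fin_cases j <;> simp [pauliZ, Matrix.mul_apply, Fin.sum_univ_two]

theorem pauliZ_eq_diagonal : pauliZ = Matrix.diagonal ![1, -1] := by
  ext i j
  fin_cases i <;> fin_cases j <;> simp [pauliZ]

theorem isSelfAdjoint_Msum (n t : ℕ) {M : Matrix (Fin 2) (Fin 2) ℂ} (hM : IsSelfAdjoint M)
    (ν : Fin n) : IsSelfAdjoint (Msum n t M ν) :=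
  isSelfAdjoint_sum _ fun τ _ => isSelfAdjoint_site hM (ν, τ)

theorem Vop_mem_unitary (n t : ℕ) (ht : 0 < t) (ν : Fin n) (φ h : ℝ) :
    Vop n t ht ν φ h ∈ unitary (QOp (Fin n × Fin t)) := by
  have hI : Complex.I ∈ skewAdjoint ℂ := by simp [skewAdjoint.mem_iff]
  have hofReal (r : ℝ) : IsSelfAdjoint (r : ℂ) := Complex.conj_ofReal r
  have hcoupling : IsSelfAdjoint (∑ τ : Fin t, if h2 : (τ : ℕ) + 1 < t then
      site pauliZ (ν, τ) * site pauliZ (ν, (⟨(τ : ℕ) + 1, h2⟩ : Fin t)) else 0) := by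
    refine isSelfAdjoint_sum _ fun τ _ => ?_
    split_ifs
    · exact isSelfAdjoint_site_mul_site isSelfAdjoint_pauliZ isSelfAdjoint_pauliZ
        (by simp [Fin.ext_iff])
    · exact .zero _
  refine mul_mem (mul_mem ?_ ?_) ?_ <;>
    refine Matrix.exp_mem_unitary_of_mem_skewAdjoint (IsSelfAdjoint.smul_mem_skewAdjoint ?_ ?_)
  · exact neg_mem hI
  · exact ((hofReal _).smul hcoupling).add
      ((hofReal _).smul (isSelfAdjoint_site isSelfAdjoint_pauliZ _))
  · exact neg_mem hI
  · exact (hofReal h).smul (isSelfAdjoint_Msum n t isSelfAdjoint_pauliZ ν)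
  · exact hI
  · exact (hofReal _).smul (isSelfAdjoint_Msum n t isSelfAdjoint_pauliX ν)

theorem UUop_mem_unitary (n t : ℕ) (ht : 0 < t) (ν : Fin n) (φ h : ℝ) :
    UUop n t ht ν φ h ∈ unitary (DOp n t) :=
  Matrix.kronecker_mem_unitary (Vop_mem_unitary n t ht ν φ h)
    (Matrix.map_conj_mem_unitary (Vop_mem_unitary n t ht ν φ h))

theorem isStarProjection_Gop (n t : ℕ) {M : Matrix (Fin 2) (Fin 2) ℂ} (hM : IsSelfAdjoint M)
    (hMM : M * M = 1) (p : Fin n × Fin t) : IsStarProjection (Gop n t M p) := by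
  refine isStarProjection_half_smul_one_add ?_ ?_
  · have hS : (site M p)ᴴ = site M p := isSelfAdjoint_site hM p
    rw [IsSelfAdjoint, Matrix.star_eq_conjTranspose, Matrix.conjTranspose_kronecker, hS]
  · rw [← Matrix.mul_kronecker_mul, site_mul_site, hMM, site_one, Matrix.one_kronecker_one]

def boundaryWeight (θ : ℝ) : Fin 2 → ℝ := ![Real.cos (θ / 2), Real.sin (θ / 2)]

theorem boundaryWeight_sq_le (θ : ℝ) (i : Fin 2) :
    boundaryWeight θ i ^ 2 ≤ (1 + |Real.cos θ|) / 2 := by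
  have hcos : Real.cos (θ / 2) ^ 2 = 1 / 2 + Real.cos θ / 2 := by
    rw [Real.cos_sq, mul_div_cancel₀ θ two_ne_zero]
  fin_cases i
  · simp only [boundaryWeight, Fin.zero_eta, Matrix.cons_val_zero, hcos]
    linarith [le_abs_self (Real.cos θ)]
  · simp only [boundaryWeight, Fin.mk_one, Matrix.cons_val_one, Matrix.cons_val_fin_one,
      Real.sin_sq, hcos]
    linarith [neg_abs_le (Real.cos θ)]

theorem two_mul_abs_boundaryWeight_mul_le (θ : ℝ) (i j : Fin 2) :
    2 * |boundaryWeight θ i * boundaryWeight θ j| ≤ 1 + |Real.cos θ| := by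
  calc 2 * |boundaryWeight θ i * boundaryWeight θ j|
      = 2 * |boundaryWeight θ i| * |boundaryWeight θ j| := by rw [abs_mul, mul_assoc]
    _ ≤ |boundaryWeight θ i| ^ 2 + |boundaryWeight θ j| ^ 2 := two_mul_le_add_sq _ _
    _ ≤ 1 + |Real.cos θ| := by
      rw [sq_abs, sq_abs]
      linarith [boundaryWeight_sq_le θ i, boundaryWeight_sq_le θ j]

theorem smul_add_smul_site_pauliZ_eq_diagonal {ι : Type} [Fintype ι] [DecidableEq ι]
    (c s : ℝ) (j : ι) :
    (c : ℂ) • ((1 / 2 : ℂ) • (1 + site pauliZ j)) + (s : ℂ) • ((1 / 2 : ℂ) • (1 - site pauliZ j)) =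
      Matrix.diagonal fun x => ((![c, s] (x j) : ℝ) : ℂ) := by
  simp only [pauliZ_eq_diagonal, site_diagonal, ← Matrix.diagonal_one, Matrix.diagonal_add,
    Matrix.diagonal_sub, ← Matrix.diagonal_smul]
  congr 1
  funext x
  simp only [Pi.smul_apply]
  generalize x j = i
  fin_cases i <;> simp <;> ring

theorem Bop_eq_diagonal (n t : ℕ) (ht : 0 < t) (ν : Fin n) (θ : ℝ) :
    Bop n t ht ν θ = Matrix.diagonal fun q : HIdx n t × HIdx n t =>
      ((2 * (boundaryWeight θ (q.1 (ν, ⟨0, ht⟩)) * boundaryWeight θ (q.2 (ν, ⟨0, ht⟩))) : ℝ) :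
        ℂ) := by
  rw [Bop, smul_add_smul_site_pauliZ_eq_diagonal, Matrix.diagonal_kronecker_diagonal,
    ← Matrix.diagonal_smul]
  congr 1
  funext q
  simp only [boundaryWeight, Pi.smul_apply, smul_eq_mul]
  push_cast
  ring

theorem norm_Bop_le (n t : ℕ) (ht : 0 < t) (ν : Fin n) (θ : ℝ) :
    ‖Bop n t ht ν θ‖ ≤ 1 + |Real.cos θ| := by
  rw [Bop_eq_diagonal, Matrix.l2_opNorm_diagonal, pi_norm_le_iff_of_nonneg (by positivity)]
  intro q
  rw [Complex.norm_real, Real.norm_eq_abs, abs_mul, abs_two]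
  exact two_mul_abs_boundaryWeight_mul_le θ _ _

theorem norm_Tmat_factor_le (n t : ℕ) (ht : 0 < t) (ν : Fin n) (θ φ h : ℝ) (p : Fin n × Fin t) :
    ‖Bop n t ht ν θ * Gop n t pauliZ p * UUop n t ht ν φ h‖ ≤ 1 + |Real.cos θ| := by
  have hG : ‖Gop n t pauliZ p‖ ≤ 1 :=
    (isStarProjection_Gop n t isSelfAdjoint_pauliZ pauliZ_mul_self p).norm_le
  have hU : ‖UUop n t ht ν φ h‖ = 1 :=
    CStarRing.norm_of_mem_unitary (UUop_mem_unitary n t ht ν φ h)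
  calc ‖Bop n t ht ν θ * Gop n t pauliZ p * UUop n t ht ν φ h‖
      ≤ ‖Bop n t ht ν θ * Gop n t pauliZ p‖ * ‖UUop n t ht ν φ h‖ := norm_mul_le _ _
    _ = ‖Bop n t ht ν θ * Gop n t pauliZ p‖ := by rw [hU, mul_one]
    _ ≤ ‖Bop n t ht ν θ‖ * ‖Gop n t pauliZ p‖ := norm_mul_le _ _
    _ ≤ ‖Bop n t ht ν θ‖ := mul_le_of_le_one_right (norm_nonneg _) hG
    _ ≤ 1 + |Real.cos θ| := norm_Bop_le n t ht ν θ

theorem norm_Tmat_le (n t : ℕ) (ht : 0 < t) (θ φ h : ℝ) :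
    ‖Tmat n t ht θ φ h‖ ≤ (1 + |Real.cos θ|) ^ n :=
  List.norm_prod_ofFn_le _ fun ν => norm_Tmat_factor_le n t ht ν θ φ h _

theorem abs_eigenvalue_Tmat_le_general (n t : ℕ) (ht : 0 < t) (θ φ h : ℝ) (lam : ℂ)
    (hlam : ∃ v : HIdx n t × HIdx n t → ℂ, v ≠ 0 ∧ (Tmat n t ht θ φ h).mulVec v = lam • v) :
    ‖lam‖ ≤ (1 + |Real.cos θ|) ^ n := by
  obtain ⟨v, hv, hTv⟩ := hlam
  exact (Matrix.norm_le_l2_opNorm_of_mulVec_eq_smul hv hTv).trans (norm_Tmat_le n t ht θ φ h)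

/-- **Bound on the eigenvalues of the transfer matrix.** For all `n, t ≥ 1` and all real
`θ, φ, h`, every eigenvalue `λ` of `T_{θ,φ}[h]` satisfies `|λ| ≤ (1 + |cos θ|)^n`. -/
theorem abs_eigenvalue_Tmat_le (n t : ℕ) (hn : 1 ≤ n) (ht : 0 < t) (θ φ h : ℝ) (lam : ℂ)
    (hlam : ∃ v : HIdx n t × HIdx n t → ℂ, v ≠ 0 ∧ (Tmat n t ht θ φ h).mulVec v = lam • v) :
    ‖lam‖ ≤ (1 + |Real.cos θ|) ^ n :=
  abs_eigenvalue_Tmat_le_general n t ht θ φ h lam hlam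
end
end

section
/- Let T be a square complex matrix and λ an eigenvalue of T such that |λ| = ‖T‖, the operator norm of T induced by the Euclidean norm. Then the algebraic multiplicity of λ equals its geometric multiplicity; equivalently, ker((T − λ·1)²) = ker(T − λ·1), i.e. λ has only trivial Jordan blocks. -/
/-!
If `‖T‖ = |λ|` and `(T - λ)² x = 0`, put `y = (T - λ) x`; then `Tⁿ x = λⁿ x + n λⁿ⁻¹ y`, and since
`‖Tⁿ x‖ ≤ |λ|ⁿ ‖x‖` this forces `n ‖y‖ ≤ 2 |λ| ‖x‖` for every `n`, so `y = 0`. Thus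
`ker (T - λ)² = ker (T - λ)`, the generalized eigenspace of `λ` is the eigenspace, and its dimension,
the algebraic multiplicity, is the geometric one.
-/

open Matrix

section Contraction

variable {𝕜 E : Type*} [RCLike 𝕜] [NormedAddCommGroup E] [NormedSpace 𝕜 E]

theorem LinearMap.iterate_apply_eq_add_nsmul_of_apply_eq_add (f : E →ₗ[𝕜] E) {x z : E}
    (hx : f x = x + z) (hz : f z = z) (n : ℕ) : f^[n] x = x + n • z := by
  induction n with
  | zero => simp
  | succ n ih =>
    rw [Function.iterate_succ_apply', ih, map_add, map_nsmul, hx, hz, succ_nsmul]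
    abel

theorem LinearMap.norm_iterate_apply_le_of_norm_apply_le (f : E →ₗ[𝕜] E)
    (hf : ∀ v, ‖f v‖ ≤ ‖v‖) (n : ℕ) (v : E) : ‖f^[n] v‖ ≤ ‖v‖ := by
  induction n with
  | zero => rfl
  | succ n ih => rw [Function.iterate_succ_apply']; exact (hf _).trans ih

theorem LinearMap.eq_zero_of_apply_eq_add_of_norm_apply_le (f : E →ₗ[𝕜] E)
    (hf : ∀ v, ‖f v‖ ≤ ‖v‖) {x z : E} (hx : f x = x + z) (hz : f z = z) : z = 0 := by
  have hbound : ∀ n : ℕ, n * ‖z‖ ≤ 2 * ‖x‖ := fun n ↦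
    calc (n : ℝ) * ‖z‖ = ‖f^[n] x - x‖ := by
          rw [f.iterate_apply_eq_add_nsmul_of_apply_eq_add hx hz, add_sub_cancel_left,
            RCLike.norm_nsmul 𝕜, nsmul_eq_mul]
      _ ≤ ‖f^[n] x‖ + ‖x‖ := norm_sub_le _ _
      _ ≤ 2 * ‖x‖ := by linarith [f.norm_iterate_apply_le_of_norm_apply_le hf n x]
  by_contra hz0
  have hpos : 0 < ‖z‖ := norm_pos_iff.mpr hz0
  obtain ⟨n, hn⟩ := exists_nat_gt (2 * ‖x‖ / ‖z‖)
  linarith [hbound n, (div_lt_iff₀ hpos).mp hn]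

end Contraction

theorem ContinuousLinearMap.sub_smul_one_apply_eq_zero_of_norm_le {𝕜 E : Type*} [RCLike 𝕜]
    [NormedAddCommGroup E] [NormedSpace 𝕜 E] (g : E →L[𝕜] E) {μ : 𝕜} (hg : ‖g‖ ≤ ‖μ‖) {x : E}
    (hx : (g - μ • 1) ((g - μ • 1) x) = 0) : (g - μ • 1) x = 0 := by
  rcases eq_or_ne μ 0 with rfl | hμ
  · have : g = 0 := norm_le_zero_iff.mp (by simpa using hg)
    simp [this]
  set y := (g - μ • 1) x
  have hgx : g x = μ • x + y := by simp [y]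
  have hgy : g y = μ • y := by simpa [sub_eq_zero] using hx
  -- Rescaling by `μ⁻¹` turns `g` into a contraction with the Jordan chain `x, μ⁻¹ • y`.
  have hcontr : ∀ v, ‖(μ⁻¹ • g) v‖ ≤ ‖v‖ := fun v ↦
    calc ‖(μ⁻¹ • g) v‖ ≤ ‖μ⁻¹ • g‖ * ‖v‖ := (μ⁻¹ • g).le_opNorm v
      _ ≤ 1 * ‖v‖ := by
          gcongr
          rw [norm_smul, norm_inv]
          exact inv_mul_le_one_of_le₀ hg (norm_nonneg μ)
      _ = ‖v‖ := one_mul _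
  have hzero := (μ⁻¹ • g : E →L[𝕜] E).toLinearMap.eq_zero_of_apply_eq_add_of_norm_apply_le hcontr
    (x := x) (z := μ⁻¹ • y) (by simp [hgx, smul_smul, hμ]) (by simp [hgy, smul_smul, hμ])
  simpa [hμ] using hzero

theorem Matrix.ker_toLin'_sub_smul_mul_self {𝕜 n : Type*} [RCLike 𝕜] [Fintype n] [DecidableEq n]
    (A : Matrix n n 𝕜) {μ : 𝕜} (hA : ‖toEuclideanCLM (n := n) (𝕜 := 𝕜) A‖ ≤ ‖μ‖) :
    LinearMap.ker (toLin' ((A - μ • 1) * (A - μ • 1))) = LinearMap.ker (toLin' (A - μ • 1)) := by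
  have hCLM : toEuclideanCLM (n := n) (𝕜 := 𝕜) (A - μ • 1) =
      toEuclideanCLM (n := n) (𝕜 := 𝕜) A - μ • 1 := by
    rw [map_sub, map_smul, map_one]
  refine le_antisymm (fun v hv ↦ ?_) (by rw [toLin'_mul]; exact LinearMap.ker_le_ker_comp _ _)
  · rw [LinearMap.mem_ker, toLin'_apply] at hv ⊢
    have h := (toEuclideanCLM (n := n) (𝕜 := 𝕜) A).sub_smul_one_apply_eq_zero_of_norm_le hA
      (x := WithLp.toLp 2 v) (by
        rw [← hCLM, toEuclideanCLM_toLp, toEuclideanCLM_toLp, mulVec_mulVec, hv, WithLp.toLp_zero])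
    rw [← hCLM, toEuclideanCLM_toLp] at h
    simpa using h

theorem Module.End.finrank_eigenspace_eq_rootMultiplicity_of_ker_sq {K V : Type*} [Field K]
    [AddCommGroup V] [Module K V] [FiniteDimensional K V] (f : End K V) (μ : K)
    (h : LinearMap.ker ((f - μ • 1) ^ 2) = LinearMap.ker (f - μ • 1)) :
    Module.finrank K (f.eigenspace μ) = f.charpoly.rootMultiplicity μ := by
  have hmax : f.maxGenEigenspace μ = f.eigenspace μ := by
    refine le_antisymm (fun v hv ↦ ?_) eigenspace_le_maxGenEigenspace
    obtain ⟨k, hk⟩ := (mem_maxGenEigenspace f μ v).mp hv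
    have hstable := ker_pow_constant (f := f - μ • 1) (k := 1) (by rw [pow_one, h]) k
    rw [eigenspace_def, ← pow_one (f - μ • 1), hstable, pow_add, mul_eq_comp]
    exact LinearMap.ker_le_ker_comp _ _ hk
  rw [← hmax, LinearMap.finrank_maxGenEigenspace_eq]

theorem eigenvalue_of_max_modulus_semisimple_general (d : ℕ)
    (T : Matrix (Fin d) (Fin d) ℂ) (lam : ℂ)
    (hmax : ‖lam‖ = ‖Matrix.toEuclideanCLM (𝕜 := ℂ) T‖) :
    (T.charpoly.rootMultiplicity lam =
        Module.finrank ℂ (Module.End.eigenspace (Matrix.toLin' T) lam)) ∧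
      LinearMap.ker (Matrix.toLin' ((T - lam • 1) * (T - lam • 1))) =
        LinearMap.ker (Matrix.toLin' (T - lam • 1)) := by
  have hker := T.ker_toLin'_sub_smul_mul_self hmax.ge
  refine ⟨?_, hker⟩
  have hlin : toLin' T - lam • 1 = toLin' (T - lam • 1) := by
    rw [map_sub, map_smul, toLin'_one, Module.End.one_eq_id]
  rw [← charpoly_toLin', Module.End.finrank_eigenspace_eq_rootMultiplicity_of_ker_sq _ lam
    (by rw [hlin, sq, Module.End.mul_eq_comp, ← toLin'_mul, hker])]

/-- **Maximal-modulus eigenvalues have trivial Jordan blocks.** -/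
theorem eigenvalue_of_max_modulus_semisimple (d : ℕ) (hd : 1 ≤ d)
    (T : Matrix (Fin d) (Fin d) ℂ) (lam : ℂ)
    (hlam : ∃ v : Fin d → ℂ, v ≠ 0 ∧ T.mulVec v = lam • v)
    (hmax : ‖lam‖ = ‖Matrix.toEuclideanCLM (𝕜 := ℂ) T‖) :
    (T.charpoly.rootMultiplicity lam =
        Module.finrank ℂ (Module.End.eigenspace (Matrix.toLin' T) lam)) ∧
      LinearMap.ker (Matrix.toLin' ((T - lam • 1) * (T - lam • 1))) =
        LinearMap.ker (Matrix.toLin' (T - lam • 1)) :=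
  eigenvalue_of_max_modulus_semisimple_general d T lam hmax
end

section
/- Fix integers n, t, N ≥ 1. Then ⟨Ψ| ∏_{ν=1}^{n}[ ∏_{τ=0}^{⌊N/2⌋−1}(G^z_{ν,t−τ}·G^x_{ν,t−τ}) · (G^z_{ν,t−⌊N/2⌋})^{N mod 2} ] |Ψ⟩ = 2^{(1−n)·min(2t,N)}, where G^a_{ν,τ} is the identity whenever τ ≤ 0. (Explicitly, the value is 2^{N(1−n)} when ⌊N/2⌋ < t and 2^{2t(1−n)} when ⌊N/2⌋ ≥ t.) -/
noncomputable section
open Complex Matrix Finset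
open scoped Kronecker

/-- `G^a_{ν,k}` with 1-based site label `k : ℕ`; the identity whenever `k ≤ 0` (in
particular for truncated subtraction `t - τ` with `τ ≥ t`). -/
def GopNat (n t : ℕ) (M : Matrix (Fin 2) (Fin 2) ℂ) (ν : Fin n) (k : ℕ) : DOp n t :=
  if hk : 1 ≤ k ∧ k ≤ t then Gop n t M (ν, ⟨k - 1, by omega⟩) else 1

/-!
Every factor `G^a_{ν,τ}` acts on a single site of the doubled chain, and the permutation `P` only
shifts `ν`, so the matrix element factorizes over the rows `τ`. On one row the operator is a
tensor power over `ν` of a `4 × 4` matrix `A ∈ {1, G^z, G^z G^x}`, and `⟨Ψ|·|Ψ⟩` contracts these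
factors cyclically in `ν`. The contraction equals `2^n`, `2` and `4 · 2^{-n}` respectively, since a
configuration invariant under the cyclic shift is constant. After the normalization `2^{-nt}` of
`|Ψ⟩`, a row hit by `w` of the `N` projectors contributes `2^{(1-n) w}`, and the `w` add up to
`min(2t, N)`.
-/

namespace Matrix

variable {ι κ α β R : Type*} [Fintype ι] [CommSemiring R]

def kronPi [Fintype κ] (F : ι → Matrix κ κ R) : Matrix (ι → κ) (ι → κ) R :=
  of fun x y => ∏ i, F i (x i) (y i)

theorem kronPi_mul [DecidableEq ι] [Fintype κ] (F G : ι → Matrix κ κ R) :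
    kronPi F * kronPi G = kronPi (F * G) := by
  ext x y
  simp only [kronPi, mul_apply, of_apply, Pi.mul_apply, Fintype.prod_sum,
    ← Finset.prod_mul_distrib]

theorem kronPi_one [Fintype κ] [DecidableEq κ] : kronPi (1 : ι → Matrix κ κ R) = 1 := by
  ext x y
  simp only [kronPi, of_apply, Pi.one_apply, one_apply, Fintype.prod_boole, funext_iff]

def kronPiHom [DecidableEq ι] [Fintype κ] [DecidableEq κ] :
    (ι → Matrix κ κ R) →* Matrix (ι → κ) (ι → κ) R where
  toFun := kronPi
  map_one' := kronPi_one
  map_mul' F G := (kronPi_mul F G).symm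

variable [DecidableEq ι] [Fintype α] [Fintype β] [DecidableEq α] [DecidableEq β]

/-- The tensor product over the sites `i` of operators `F i` on a doubled site `α × β`, as an
operator on the doubled chain `(ι → α) × (ι → β)`. -/
def sitewise :
    (ι → Matrix (α × β) (α × β) R) →* Matrix ((ι → α) × (ι → β)) ((ι → α) × (ι → β)) R :=
  (reindexAlgEquiv R R (Equiv.arrowProdEquivProdArrow ι (fun _ => α) (fun _ => β))).toMonoidHom.comp
    kronPiHom

theorem sitewise_apply (F : ι → Matrix (α × β) (α × β) R) (x y : (ι → α) × (ι → β)) :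
    sitewise F x y = ∏ i, F i (x.1 i, x.2 i) (y.1 i, y.2 i) := rfl

theorem kronPi_kronecker_kronPi (F : ι → Matrix α α R) (G : ι → Matrix β β R) :
    kronPi F ⊗ₖ kronPi G = sitewise fun i => F i ⊗ₖ G i := by
  ext ⟨x₁, x₂⟩ ⟨y₁, y₂⟩
  simp only [kronecker_apply, kronPi, of_apply, sitewise_apply, Finset.prod_mul_distrib]

theorem sitewise_mulSingle_apply (p : ι) (A : Matrix (α × β) (α × β) R)
    (x y : (ι → α) × (ι → β)) :
    sitewise (Pi.mulSingle p A) x y =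
      A (x.1 p, x.2 p) (y.1 p, y.2 p) *
        ∏ i ∈ univ.erase p, (1 : Matrix (α × β) (α × β) R) (x.1 i, x.2 i) (y.1 i, y.2 i) := by
  rw [sitewise_apply, ← Finset.mul_prod_erase _ _ (mem_univ p), Pi.mulSingle_eq_same]
  congr 1
  exact Finset.prod_congr rfl fun i hi => by rw [Pi.mulSingle_eq_of_ne (ne_of_mem_erase hi)]

end Matrix

open Matrix

namespace ProjectorMatrixElement

theorem prod_ofFn_ite_eq {M : Type*} [Monoid M] (a : M) (d m : ℕ) :
    (List.ofFn fun τ : Fin m => if d = (τ : ℕ) then a else 1).prod = if d < m then a else 1 := by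
  induction m with
  | zero => simp
  | succ m ih =>
    rw [List.ofFn_succ', List.prod_concat]
    simp only [Fin.val_castSucc, Fin.val_last, ih]
    split_ifs <;> first | omega | simp

theorem star_dotProduct_mulVec_of_graph {α β R : Type*} [Fintype α] [Fintype β] [DecidableEq α]
    [CommSemiring R] [StarRing R] (g : β → α) (c : R)
    (L : Matrix (α × β) (α × β) R) (ψ : α × β → R) (hψ : ∀ x, ψ x = if x.1 = g x.2 then c else 0) :
    star ψ ⬝ᵥ L *ᵥ ψ = star c * c * ∑ a, ∑ b, L (g a, a) (g b, b) := by
  simp only [dotProduct, mulVec, Pi.star_apply, hψ, Fintype.sum_prod_type_right, apply_ite star,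
    star_zero, ite_mul, mul_ite, zero_mul, mul_zero, Finset.sum_ite_eq', Finset.mem_univ, if_true]
  simp only [Finset.mul_sum]
  exact Finset.sum_congr rfl fun _ _ => Finset.sum_congr rfl fun _ _ => by ring

theorem sum_prod_curry {ι κ α R : Type*} [Fintype ι] [Fintype κ] [DecidableEq ι] [DecidableEq κ]
    [Fintype α] [CommSemiring R] (g : κ → (ι → α) → R) :
    ∑ a : ι × κ → α, ∏ j, g j (fun ν => a (ν, j)) = ∏ j, ∑ u, g j u := by
  rw [Fintype.prod_sum]
  exact Fintype.sum_equiv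
    ((Equiv.arrowCongr (Equiv.prodComm ι κ) (Equiv.refl α)).trans (Equiv.curry κ ι α)) _ _
    fun _ => rfl

theorem apply_eq_apply_zero_of_finRotate_invariant {α : Type*} {m : ℕ} {u : Fin (m + 1) → α}
    (h : ∀ ν, u (finRotate (m + 1) ν) = u ν) (ν : Fin (m + 1)) : u ν = u 0 := by
  induction ν using Fin.induction with
  | zero => rfl
  | succ i ih =>
    have hi : finRotate (m + 1) i.castSucc = i.succ := by simp
    rw [← hi, h, ih]

theorem card_finRotate_invariant {α : Type*} [Fintype α] [DecidableEq α] {n : ℕ} (hn : n ≠ 0) :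
    #{u : Fin n → α | ∀ ν, u (finRotate n ν) = u ν} = Fintype.card α := by
  obtain ⟨m, rfl⟩ := Nat.exists_eq_succ_of_ne_zero hn
  have hconst : ({u : Fin (m + 1) → α | ∀ ν, u (finRotate (m + 1) ν) = u ν} : Finset _) =
      univ.image (Function.const (Fin (m + 1))) := by
    ext u
    simp only [Finset.mem_filter, Finset.mem_univ, true_and, Finset.mem_image]
    constructor
    · exact fun h => ⟨u 0, funext fun ν => (apply_eq_apply_zero_of_finRotate_invariant h ν).symm⟩
    · rintro ⟨a, -, rfl⟩ ν
      rfl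
  rw [hconst, Finset.card_image_of_injective _ Function.const_injective, Finset.card_univ]

abbrev SiteOp := Matrix (Fin 2 × Fin 2) (Fin 2 × Fin 2) ℂ

def localG (M : Matrix (Fin 2) (Fin 2) ℂ) : SiteOp := (1 / 2 : ℂ) • (1 + M ⊗ₖ M)

theorem localG_pauliZ_apply (x y : Fin 2 × Fin 2) :
    localG pauliZ x y = if x = y ∧ x.1 = x.2 then 1 else 0 := by
  obtain ⟨a, b⟩ := x
  obtain ⟨c, d⟩ := y
  simp only [localG, pauliZ, Matrix.smul_apply, Matrix.add_apply, one_apply, kronecker_apply,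
    Prod.mk.injEq]
  fin_cases a <;> fin_cases b <;> fin_cases c <;> fin_cases d <;> norm_num

theorem localG_pauliZ_mul_localG_pauliX_apply (x y : Fin 2 × Fin 2) :
    (localG pauliZ * localG pauliX) x y = if x.1 = x.2 ∧ y.1 = y.2 then 1 / 2 else 0 := by
  obtain ⟨a, b⟩ := x
  obtain ⟨c, d⟩ := y
  simp only [mul_apply, Fintype.sum_prod_type, Fin.sum_univ_two, localG, pauliZ, pauliX,
    Matrix.smul_apply, Matrix.add_apply, one_apply, kronecker_apply, Prod.mk.injEq]
  fin_cases a <;> fin_cases b <;> fin_cases c <;> fin_cases d <;> norm_num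

theorem site_eq_kronPi {ι : Type} [DecidableEq ι] [Fintype ι] (M : Matrix (Fin 2) (Fin 2) ℂ)
    (j : ι) : site M j = kronPi (Pi.mulSingle j M) := by
  ext x y
  refine Finset.prod_congr rfl fun k _ => ?_
  by_cases hk : k = j
  · simp [hk]
  · simp [hk, one_apply]

section Chain

variable {n t : ℕ}

theorem gop_eq_sitewise (M : Matrix (Fin 2) (Fin 2) ℂ) (p : Fin n × Fin t) :
    Gop n t M p = sitewise (Pi.mulSingle p (localG M)) := by
  have hkron : site M p ⊗ₖ site M p = sitewise (Pi.mulSingle p (M ⊗ₖ M)) := by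
    rw [site_eq_kronPi, kronPi_kronecker_kronPi]
    congr 1
    funext q
    by_cases hq : q = p
    · subst hq; simp
    · simp [Pi.mulSingle_eq_of_ne hq]
  rw [Gop, hkron, ← map_one sitewise, ← Pi.mulSingle_one p]
  ext x y
  simp only [Matrix.smul_apply, Matrix.add_apply, sitewise_mulSingle_apply, localG, smul_eq_mul]
  ring

theorem gopNat_eq_sitewise (M : Matrix (Fin 2) (Fin 2) ℂ) (ν : Fin n) (k : ℕ) :
    GopNat n t M ν k =
      sitewise fun q => if q.1 = ν ∧ (q.2 : ℕ) + 1 = k then localG M else 1 := by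
  unfold GopNat
  split_ifs with hk
  · rw [gop_eq_sitewise]
    congr 1
    funext q
    simp only [Pi.mulSingle_apply, Prod.ext_iff, Fin.ext_iff]
    congr 1
    grind
  · rw [← map_one sitewise]
    congr 1
    funext q
    rw [if_neg (by omega), Pi.one_apply]

theorem ofFn_sitewise {m : ℕ} (F : Fin m → Fin n × Fin t → SiteOp) :
    (List.ofFn fun i => sitewise (F i)) = (List.ofFn F).map sitewise := by
  rw [List.map_ofFn]
  rfl

/-- The local factor at depth `d` below the top row: the site `(ν, j)` (with `j` counted from `0`)
has label `k = j + 1` and depth `t - k`; the pair `G^z_{ν,t-τ} G^x_{ν,t-τ}` lands at depth `τ`, and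
the trailing `G^z` at depth `⌊N/2⌋`. -/
def rowOp (N d : ℕ) : SiteOp :=
  if d < N / 2 then localG pauliZ * localG pauliX
  else if d = N / 2 ∧ N % 2 = 1 then localG pauliZ else 1

theorem column_eq_sitewise (N : ℕ) (ν : Fin n) :
    (List.ofFn fun τ : Fin (N / 2) =>
        GopNat n t pauliZ ν (t - τ) * GopNat n t pauliX ν (t - τ)).prod *
      GopNat n t pauliZ ν (t - N / 2) ^ (N % 2) =
    sitewise fun q => if q.1 = ν then rowOp N (t - 1 - q.2) else 1 := by
  simp only [gopNat_eq_sitewise, ← map_mul, ← map_pow, ofFn_sitewise, ← map_list_prod]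
  congr 1
  funext ⟨μ, j⟩
  simp only [Pi.mul_apply, Pi.pow_apply, Pi.list_prod_apply, List.map_ofFn, Function.comp_def]
  by_cases hμ : μ = ν
  · have hpair : ∀ τ : Fin (N / 2),
        ((if μ = ν ∧ (j : ℕ) + 1 = t - τ then localG pauliZ else 1) *
          if μ = ν ∧ (j : ℕ) + 1 = t - τ then localG pauliX else 1) =
        if t - 1 - j = (τ : ℕ) then localG pauliZ * localG pauliX else 1 := by
      intro τ
      by_cases h : (j : ℕ) + 1 = t - τ
      · rw [if_pos ⟨hμ, h⟩, if_pos ⟨hμ, h⟩, if_pos (by omega)]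
      · rw [if_neg (by tauto), if_neg (by tauto), if_neg (by omega), one_mul]
    have hodd : (if μ = ν ∧ (j : ℕ) + 1 = t - N / 2 then localG pauliZ else 1) ^ (N % 2) =
        if t - 1 - j = N / 2 ∧ N % 2 = 1 then localG pauliZ else 1 := by
      rcases Nat.mod_two_eq_zero_or_one N with h | h <;> rw [h]
      · rw [pow_zero, if_neg (by omega)]
      · rw [pow_one]
        exact if_congr (by omega) rfl rfl
    simp only [hpair, hodd, prod_ofFn_ite_eq, rowOp, if_pos hμ]
    split_ifs <;> first | omega | simp
  · simp [hμ]

theorem product_eq_sitewise (N : ℕ) :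
    (List.ofFn fun ν : Fin n =>
        (List.ofFn fun τ : Fin (N / 2) =>
            GopNat n t pauliZ ν (t - τ) * GopNat n t pauliX ν (t - τ)).prod *
          GopNat n t pauliZ ν (t - N / 2) ^ (N % 2)).prod =
      sitewise fun q : Fin n × Fin t => rowOp N (t - 1 - q.2) := by
  simp only [column_eq_sitewise, ofFn_sitewise, ← map_list_prod]
  congr 1
  funext ⟨μ, j⟩
  simp only [Pi.list_prod_apply, List.map_ofFn, Function.comp_def, Fin.ext_iff, prod_ofFn_ite_eq,
    if_pos μ.isLt]

def shiftConfig (s : HIdx n t) : HIdx n t := fun p => s (finRotate n p.1, p.2)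

theorem permMat_apply (r s : HIdx n t) :
    permMat n t r s = if r = shiftConfig s then 1 else 0 := by
  simp only [permMat, of_apply, shiftConfig, funext_iff]

theorem psiVec_apply (x : HIdx n t × HIdx n t) :
    PsiVec n t x =
      if x.1 = shiftConfig x.2 then ((Real.sqrt 2 ^ (n * t) : ℝ) : ℂ)⁻¹ else 0 := by
  have hP : ∀ y, (Pop n t)ᴴ x y = if y = (x.1, shiftConfig x.2) then 1 else 0 := by
    intro y
    rw [conjTranspose_apply, Pop, kronecker_apply, permMat_apply, one_apply]
    split_ifs <;> simp_all [Prod.ext_iff, eq_comm]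
  simp only [PsiVec, mulVec, dotProduct, hP, ite_mul, one_mul, zero_mul, Finset.sum_ite_eq',
    Finset.mem_univ, if_true, oneVec]

/-- The contraction of one row: `P` pairs the copy `ν + 1` in the first factor of `H ⊗ H` with the
copy `ν` in the second. -/
def cyclicSum (n : ℕ) (A : SiteOp) : ℂ :=
  ∑ u : Fin n → Fin 2, ∑ v : Fin n → Fin 2,
    ∏ ν, A (u (finRotate n ν), u ν) (v (finRotate n ν), v ν)

theorem expectation_sitewise (A : Fin t → SiteOp) :
    star (PsiVec n t) ⬝ᵥ (sitewise fun q : Fin n × Fin t => A q.2) *ᵥ PsiVec n t =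
      ∏ j, ((2 : ℂ) ^ n)⁻¹ * cyclicSum n (A j) := by
  rw [star_dotProduct_mulVec_of_graph shiftConfig _ _ _ psiVec_apply, Finset.prod_mul_distrib]
  congr 1
  · have hsq : ((Real.sqrt 2 ^ (n * t) : ℝ) : ℂ) * ((Real.sqrt 2 ^ (n * t) : ℝ) : ℂ) =
        2 ^ (n * t) := by
      rw [← Complex.ofReal_mul, ← mul_pow, Real.mul_self_sqrt zero_le_two]
      norm_cast
    rw [Finset.prod_const, Finset.card_univ, Fintype.card_fin, ← inv_pow, ← pow_mul, star_inv₀,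
      Complex.star_def, Complex.conj_ofReal, ← mul_inv, hsq, inv_pow]
  · simp only [sitewise_apply, Fintype.prod_prod_type_right, shiftConfig]
    calc ∑ a : HIdx n t, ∑ b : HIdx n t, ∏ j, ∏ ν,
          A j (a (finRotate n ν, j), a (ν, j)) (b (finRotate n ν, j), b (ν, j))
        = ∑ a : HIdx n t, ∏ j, ∑ v : Fin n → Fin 2, ∏ ν,
          A j (a (finRotate n ν, j), a (ν, j)) (v (finRotate n ν), v ν) :=
          Finset.sum_congr rfl fun a _ => sum_prod_curry fun j v =>
            ∏ ν, A j (a (finRotate n ν, j), a (ν, j)) (v (finRotate n ν), v ν)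
      _ = ∏ j, cyclicSum n (A j) := sum_prod_curry fun j u =>
            ∑ v : Fin n → Fin 2, ∏ ν, A j (u (finRotate n ν), u ν) (v (finRotate n ν), v ν)

theorem sum_boole_finRotate_invariant (hn : n ≠ 0) :
    ∑ u : Fin n → Fin 2, (if ∀ ν, u (finRotate n ν) = u ν then 1 else 0 : ℂ) = 2 := by
  rw [Finset.sum_boole, card_finRotate_invariant hn, Fintype.card_fin, Nat.cast_ofNat]

theorem cyclicSum_one : cyclicSum n 1 = 2 ^ n := by
  have hentry : ∀ u v : Fin n → Fin 2,
      ∏ ν, (1 : SiteOp) (u (finRotate n ν), u ν) (v (finRotate n ν), v ν) =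
        if u = v then 1 else 0 := by
    intro u v
    simp only [one_apply, Prod.mk.injEq, Fintype.prod_boole]
    congr 1
    exact propext ⟨fun h => funext fun ν => (h ν).2, fun h ν => by subst h; exact ⟨rfl, rfl⟩⟩
  simp [cyclicSum, hentry]

theorem cyclicSum_localG_pauliZ (hn : n ≠ 0) : cyclicSum n (localG pauliZ) = 2 := by
  have hentry : ∀ u v : Fin n → Fin 2,
      ∏ ν, localG pauliZ (u (finRotate n ν), u ν) (v (finRotate n ν), v ν) =
        if u = v then (if ∀ ν, u (finRotate n ν) = u ν then 1 else 0) else 0 := by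
    intro u v
    simp only [localG_pauliZ_apply, Prod.mk.injEq, Fintype.prod_boole, ← ite_and]
    congr 1
    exact propext ⟨fun h => ⟨funext fun ν => (h ν).1.2, fun ν => (h ν).2⟩,
      fun ⟨huv, hu⟩ ν => by subst huv; exact ⟨⟨rfl, rfl⟩, hu ν⟩⟩
  simp only [cyclicSum, hentry, Finset.sum_ite_eq, Finset.mem_univ, if_true,
    sum_boole_finRotate_invariant hn]

theorem cyclicSum_localG_pauliZ_mul_localG_pauliX (hn : n ≠ 0) :
    cyclicSum n (localG pauliZ * localG pauliX) = 2 ^ 2 * (2 ^ n)⁻¹ := by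
  have hentry : ∀ u v : Fin n → Fin 2,
      ∏ ν, (localG pauliZ * localG pauliX) (u (finRotate n ν), u ν) (v (finRotate n ν), v ν) =
        (if ∀ ν, u (finRotate n ν) = u ν then 1 else 0) *
          (if ∀ ν, v (finRotate n ν) = v ν then 1 else 0) * (2 ^ n)⁻¹ := by
    intro u v
    simp only [localG_pauliZ_mul_localG_pauliX_apply, Fintype.prod_ite_zero, Finset.prod_const,
      Finset.card_univ, Fintype.card_fin, ite_and, one_div, inv_pow]
    split_ifs <;> simp
  simp only [cyclicSum, hentry, ← Finset.sum_mul, ← Finset.mul_sum,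
    sum_boole_finRotate_invariant hn]
  ring

/-- The exponent `min 2 (N - 2 d)` counts the projectors among the `N` that act on depth `d`. -/
theorem inv_mul_cyclicSum_rowOp (hn : n ≠ 0) (N d : ℕ) :
    ((2 : ℂ) ^ n)⁻¹ * cyclicSum n (rowOp N d) = ((2 : ℂ) ^ (1 - n : ℤ)) ^ min 2 (N - 2 * d) := by
  rw [zpow_sub₀ two_ne_zero, zpow_one, zpow_natCast, rowOp]
  split_ifs with hpair hodd
  · rw [cyclicSum_localG_pauliZ_mul_localG_pauliX hn, show min 2 (N - 2 * d) = 2 by omega]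
    ring
  · rw [cyclicSum_localG_pauliZ hn, show min 2 (N - 2 * d) = 1 by omega]
    ring
  · rw [cyclicSum_one, show min 2 (N - 2 * d) = 0 by omega]
    simp

end Chain

theorem sum_min_two_sub (N t : ℕ) :
    ∑ j : Fin t, min 2 (N - 2 * (t - 1 - j)) = min (2 * t) N := by
  rw [Fin.sum_univ_eq_sum_range (fun j => min 2 (N - 2 * (t - 1 - j))),
    Finset.sum_range_reflect (fun d => min 2 (N - 2 * d))]
  induction t with
  | zero => simp
  | succ t ih =>
    rw [Finset.sum_range_succ, ih]
    omega

end ProjectorMatrixElement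

open ProjectorMatrixElement in
theorem projector_matrix_element_general (n t N : ℕ) (hn : 1 ≤ n) :
    dotProduct (star (PsiVec n t))
        (((List.ofFn (fun ν : Fin n =>
            (List.ofFn (fun τ : Fin (N / 2) =>
              GopNat n t pauliZ ν (t - (τ : ℕ)) * GopNat n t pauliX ν (t - (τ : ℕ)))).prod *
              (GopNat n t pauliZ ν (t - N / 2)) ^ (N % 2))).prod).mulVec (PsiVec n t)) =
      (2 : ℂ) ^ (((1 : ℤ) - (n : ℤ)) * min (2 * (t : ℤ)) (N : ℤ)) := by
  rw [product_eq_sitewise, expectation_sitewise fun j => rowOp N (t - 1 - j)]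
  simp_rw [inv_mul_cyclicSum_rowOp (Nat.one_le_iff_ne_zero.mp hn)]
  rw [Finset.prod_pow_eq_pow_sum, sum_min_two_sub, ← zpow_natCast, ← _root_.zpow_mul]
  push_cast
  rfl

/-- **Evaluation of the projector matrix element:**
`⟨Ψ|∏_ν ∏_{τ=0}^{⌊N/2⌋−1}(G^z_{ν,t−τ}G^x_{ν,t−τ})·(G^z_{ν,t−⌊N/2⌋})^{N mod 2}|Ψ⟩
  = 2^{(1−n)·min(2t,N)}`. -/
theorem projector_matrix_element (n t N : ℕ) (hn : 1 ≤ n) (ht : 0 < t) (hN : 1 ≤ N) :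
    dotProduct (star (PsiVec n t))
        (((List.ofFn (fun ν : Fin n =>
            (List.ofFn (fun τ : Fin (N / 2) =>
              GopNat n t pauliZ ν (t - (τ : ℕ)) * GopNat n t pauliX ν (t - (τ : ℕ)))).prod *
              (GopNat n t pauliZ ν (t - N / 2)) ^ (N % 2))).prod).mulVec (PsiVec n t)) =
      (2 : ℂ) ^ (((1 : ℤ) - (n : ℤ)) * min (2 * (t : ℤ)) (N : ℤ)) :=
  projector_matrix_element_general n t N hn
end
end

section
/- For every integer L ≥ 1 and every choice of signs s_1,…,s_L ∈ {−1,+1}, the 2×2 matrix trace satisfies |Tr( ∏_{j=1}^{L} ½(1 + s_j σ^z)·exp(i(π/4)σ^x) )| = 2^{−L/2}, where the product is the ordered matrix product with j increasing from left to right. -/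
/-!
For `s = ±1` the projector `½(1 + s σ^z)` is a matrix unit `E_ii`, so each factor `E_ii U` keeps
only row `i` of `U = exp(i(π/4)σ^x) = (1 + iσ^x)/√2`. Since `E_aa U E_bb = U_ab E_ab`, the product
collapses to a multiple of a single `E_ab U`, and its trace is the cyclic product of the entries
`U_{a_j a_(j+1)}`. All four entries of `U` have modulus `1/√2`.
-/

noncomputable section
open Complex Matrix

section SingleMul

variable {𝕜 n : Type*} [NormedField 𝕜] [Fintype n] [DecidableEq n]
  {M : Matrix n n 𝕜} {r : ℝ}

theorem exists_prod_map_single_mul_eq_smul (hM : ∀ i j, ‖M i j‖ = r) (a : n) (l : List n) :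
    ∃ (c : 𝕜) (b : n), ‖c‖ = r ^ l.length ∧
      ((a :: l).map fun i => single i i 1 * M).prod = c • (single a b 1 * M) := by
  induction l generalizing a with
  | nil => exact ⟨1, a, by simp, by simp⟩
  | cons x l ih =>
    obtain ⟨c, b, hc, hprod⟩ := ih x
    refine ⟨M a x * c, b, by rw [norm_mul, hM, hc, List.length_cons, pow_succ'], ?_⟩
    have hsingle : single a a 1 * M * single x b 1 = M a x • single a b (1 : 𝕜) := by
      rw [single_mul_mul_single, smul_single, smul_eq_mul, one_mul]
    rw [List.map_cons, List.prod_cons, hprod, Matrix.mul_smul, ← Matrix.mul_assoc, hsingle,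
      Matrix.smul_mul, smul_smul, mul_comm]

theorem norm_trace_prod_map_single_mul (hM : ∀ i j, ‖M i j‖ = r) {l : List n} (hl : l ≠ []) :
    ‖trace (l.map fun i => single i i 1 * M).prod‖ = r ^ l.length := by
  obtain ⟨a, l, rfl⟩ := List.exists_cons_of_ne_nil hl
  obtain ⟨c, b, hc, hprod⟩ := exists_prod_map_single_mul_eq_smul hM a l
  rw [hprod, trace_smul, trace_single_mul, smul_eq_mul, one_smul, norm_mul, hc, hM,
    List.length_cons, pow_succ]

end SingleMul

theorem exists_half_smul_one_add_smul_pauliZ_eq_single {s : ℝ} (hs : s = 1 ∨ s = -1) :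
    ∃ i, (1 / 2 : ℂ) • (1 + (s : ℂ) • pauliZ) = single i i 1 := by
  rcases hs with rfl | rfl
  · refine ⟨0, ?_⟩
    ext i j; fin_cases i <;> fin_cases j <;> norm_num [pauliZ, single]
  · refine ⟨1, ?_⟩
    ext i j; fin_cases i <;> fin_cases j <;> norm_num [pauliZ, single]

theorem exp_smul_pauliX (c : ℂ) :
    NormedSpace.exp (c • pauliX) = !![cosh c, sinh c; sinh c, cosh c] := by
  set H : Matrix (Fin 2) (Fin 2) ℂ := !![1, 1; 1, -1]
  have hH : H⁻¹ = (1 / 2 : ℂ) • H := by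
    refine inv_eq_left_inv ?_
    ext i j; fin_cases i <;> fin_cases j <;> simp [H] <;> norm_num
  have hconj : c • pauliX = H * diagonal ![c, -c] * H⁻¹ := by
    rw [hH]
    ext i j; fin_cases i <;> fin_cases j <;> simp [H, pauliX, diagonal_vec2] <;> ring
  have hexp : NormedSpace.exp ![c, -c] = ![exp c, exp (-c)] := by
    funext i; fin_cases i <;> simp [Complex.exp_eq_exp_ℂ]
  have hHunit : IsUnit H := by
    simp [isUnit_iff_isUnit_det, H, det_fin_two_of]; norm_num
  rw [hconj, exp_conj _ _ hHunit, exp_diagonal, hexp, hH]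
  ext i j; fin_cases i <;> fin_cases j <;> simp [H, diagonal_vec2, cosh, sinh] <;> ring

theorem norm_exp_I_smul_pi_div_four_smul_pauliX_apply (i j : Fin 2) :
    ‖NormedSpace.exp (I • (((Real.pi / 4 : ℝ) : ℂ) • pauliX)) i j‖ = (Real.sqrt 2)⁻¹ := by
  have hcos : ‖cosh (((Real.pi / 4 : ℝ) : ℂ) * I)‖ = (Real.sqrt 2)⁻¹ := by
    rw [cosh_mul_I, ← ofReal_cos, norm_real, Real.cos_pi_div_four, Real.sqrt_div_self,
      Real.norm_of_nonneg (by positivity)]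
  have hsin : ‖sinh (((Real.pi / 4 : ℝ) : ℂ) * I)‖ = (Real.sqrt 2)⁻¹ := by
    rw [sinh_mul_I, ← ofReal_sin, norm_mul, norm_I, mul_one, norm_real, Real.sin_pi_div_four,
      Real.sqrt_div_self, Real.norm_of_nonneg (by positivity)]
  rw [smul_smul, mul_comm, exp_smul_pauliX]
  fin_cases i <;> fin_cases j <;> assumption

/-- **Modulus of the trace of a product of `σ^z`-projectors and `x`-kicks.** -/
theorem abs_trace_projector_kick (L : ℕ) (hL : 1 ≤ L) (s : Fin L → ℝ)
    (hs : ∀ j, s j = 1 ∨ s j = -1) :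
    ‖(Matrix.trace
      (List.ofFn (fun j : Fin L =>
        ((1 / 2 : ℂ) • (1 + ((s j : ℝ) : ℂ) • pauliZ)) *
          NormedSpace.exp (Complex.I • (((Real.pi / 4 : ℝ) : ℂ) • pauliX)))).prod)‖ =
      (Real.sqrt 2 ^ L)⁻¹ := by
  set U := NormedSpace.exp (Complex.I • (((Real.pi / 4 : ℝ) : ℂ) • pauliX))
  choose idx hidx using fun j => exists_half_smul_one_add_smul_pauliZ_eq_single (hs j)
  have hfactors : (List.ofFn fun j => (1 / 2 : ℂ) • (1 + ((s j : ℝ) : ℂ) • pauliZ) * U) =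
      (List.ofFn idx).map fun i => single i i 1 * U := by
    simp only [hidx, List.map_ofFn, Function.comp_def]
  have hne : List.ofFn idx ≠ [] := by
    rw [Ne, List.ofFn_eq_nil_iff]; omega
  rw [hfactors, norm_trace_prod_map_single_mul norm_exp_I_smul_pi_div_four_smul_pauliX_apply hne,
    List.length_ofFn, inv_pow]
end
end
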